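/- The number of walks of length n from (0,0) to (0,0) on D_3 satisfies the generating function identity (1 - 9t³ + 9t⁶ - 8t⁹)·F(t) = 1 - 8t³ + 5t⁶ - 2t⁹, where F(t) = Σ_{n≥0} f(n) t^n as a formal power series. -/

import Mathlib

/-!
Enumerating the ten vertices of `D₃`, closed walks at the origin are counted by the diagonal
entries `f(n) = (Aⁿ)₀₀` of the adjacency matrix `A`. By Cayley–Hamilton, with characteristic
polynomial `x¹⁰ - 9x⁷ + 9x⁴ - 8x`, these satisfy
`f(n + 10) - 9 f(n + 7) + 9 f(n + 4) - 8 f(n + 1) = 0`, so multiplying `F` by the reversed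
polynomial `1 - 9t³ + 9t⁶ - 8t⁹` kills every coefficient from `t¹⁰` on; the remaining ones come
from `f(0), …, f(9) = 1, 0, 0, 1, 0, 0, 5, 0, 0, 42`.
-/

/-- Directed edge of the graph `D_k`. -/
def Dedge (k : ℕ) (p q : ℕ × ℕ) : Prop :=
  p.1 + p.2 ≤ k ∧ q.1 + q.2 ≤ k ∧
    (q = (p.1, p.2 + 1) ∨ (q.1 + 1 = p.1 ∧ q.2 = p.2) ∨
      (q.1 = p.1 + 1 ∧ q.2 + 1 = p.2))

/-- Walks of length `n` from `u` to `v` in `D_k`. -/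
def Walk (k n : ℕ) (u v : ℕ × ℕ) : Type :=
  { f : Fin (n + 1) → ℕ × ℕ // f 0 = u ∧ f (Fin.last n) = v ∧
      ∀ i : Fin n, Dedge k (f i.castSucc) (f i.succ) }

/-- The number of walks of length `n` from `u` to `v` in `D_k`. -/
noncomputable def walkCount (k n : ℕ) (u v : ℕ × ℕ) : ℕ := Nat.card (Walk k n u v)

open Function PowerSeries

instance (k : ℕ) (p q : ℕ × ℕ) : Decidable (Dedge k p q) := by
  unfold Dedge; infer_instance

instance (k : ℕ) (u : ℕ × ℕ) : Finite {w : ℕ × ℕ // Dedge k u w} :=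
  ((Set.finite_Iic (k, k)).subset fun w hw => by
    simp only [Set.mem_Iic, Prod.le_def]; have := hw.2.1; omega).to_subtype

namespace Walk

variable {k : ℕ}

def zeroEquiv (u v : ℕ × ℕ) : Walk k 0 u v ≃ PLift (u = v) where
  toFun f := ⟨f.2.1.symm.trans f.2.2.1⟩
  invFun h := ⟨fun _ => u, rfl, h.down, fun i => i.elim0⟩
  left_inv f := Subtype.ext <| funext fun i => by
    rw [Fin.fin_one_eq_zero i]; exact f.2.1.symm
  right_inv _ := Subsingleton.elim _ _

def succEquiv (n : ℕ) (u v : ℕ × ℕ) :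
    Walk k (n + 1) u v ≃ Σ w : {w : ℕ × ℕ // Dedge k u w}, Walk k n w v where
  toFun f :=
    ⟨⟨f.1 1, by simpa [f.2.1] using f.2.2.2 0⟩,
      ⟨fun i => f.1 i.succ, rfl, by simpa using f.2.2.1, fun i => by
        simpa [← Fin.succ_castSucc] using f.2.2.2 i.succ⟩⟩
  invFun p :=
    ⟨Fin.cons u p.2.1, rfl, p.2.2.2.1,
      Fin.cases (by simpa [p.2.2.1] using p.1.2) fun j => p.2.2.2.2 j⟩
  left_inv f := Subtype.ext <| funext fun i => by
    cases i using Fin.cases with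
    | zero => exact f.2.1.symm
    | succ j => rfl
  right_inv := by
    rintro ⟨⟨w, hw⟩, g, hg0, hg⟩
    change g 0 = w at hg0
    subst hg0
    rfl

instance finite : ∀ (n : ℕ) (u v : ℕ × ℕ), Finite (Walk k n u v)
  | 0, u, v => .of_equiv _ (zeroEquiv u v).symm
  | n + 1, u, v =>
    haveI := fun w : {w : ℕ × ℕ // Dedge k u w} => finite n w v
    .of_equiv _ (succEquiv n u v).symm

end Walk

lemma walkCount_zero (k : ℕ) (u v : ℕ × ℕ) : walkCount k 0 u v = if u = v then 1 else 0 := by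
  rw [walkCount, Nat.card_congr (Walk.zeroEquiv u v)]
  split_ifs with h
  · exact Nat.card_eq_one_iff_unique.2 ⟨inferInstance, ⟨⟨h⟩⟩⟩
  · have : IsEmpty (PLift (u = v)) := ⟨fun p => h p.down⟩
    exact Nat.card_of_isEmpty

section Enumeration

variable {k : ℕ} {ι : Type*} [Fintype ι]

def adjMatrix (e : ι → ℕ × ℕ) (k : ℕ) : Matrix ι ι ℕ :=
  Matrix.of fun i j => if Dedge k (e i) (e j) then 1 else 0

lemma walkCount_succ {e : ι → ℕ × ℕ} (he : Injective e)
    (hcover : ∀ p : ℕ × ℕ, p.1 + p.2 ≤ k → ∃ i, e i = p) (n : ℕ) (u v : ℕ × ℕ) :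
    walkCount k (n + 1) u v = ∑ i, (if Dedge k u (e i) then 1 else 0) * walkCount k n (e i) v := by
  let firstStep : {i // Dedge k u (e i)} ≃ {w // Dedge k u w} :=
    .ofBijective (fun i => ⟨e i, i.2⟩) ⟨fun i j h => Subtype.ext (he (congrArg Subtype.val h)),
      fun w => let ⟨i, hi⟩ := hcover w w.2.2.1; ⟨⟨i, hi ▸ w.2⟩, Subtype.ext hi⟩⟩
  rw [walkCount, Nat.card_congr ((Walk.succEquiv n u v).trans firstStep.sigmaCongrLeft.symm),
    Nat.card_sigma]
  change ∑ i : {i // Dedge k u (e i)}, walkCount k n (e i) v = _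
  simp only [boole_mul, Finset.sum_ite, Finset.sum_const_zero, add_zero]
  exact (Finset.sum_subtype _ (fun _ => Finset.mem_filter_univ _) fun i => walkCount k n (e i) v).symm

lemma walkCount_eq_adjMatrix_pow [DecidableEq ι] {e : ι → ℕ × ℕ} (he : Injective e)
    (hcover : ∀ p : ℕ × ℕ, p.1 + p.2 ≤ k → ∃ i, e i = p) (n : ℕ) (i j : ι) :
    walkCount k n (e i) (e j) = (adjMatrix e k ^ n) i j := by
  induction n generalizing i with
  | zero => simp [walkCount_zero, Matrix.one_apply, he.eq_iff]
  | succ n ih => simp [walkCount_succ he hcover, pow_succ', Matrix.mul_apply, adjMatrix, ih]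

end Enumeration

def vertices3 : Fin 10 → ℕ × ℕ :=
  ![(0, 0), (0, 1), (0, 2), (0, 3), (1, 0), (1, 1), (1, 2), (2, 0), (2, 1), (3, 0)]

lemma vertices3_injective : Injective vertices3 := by decide

lemma exists_vertices3_eq (p : ℕ × ℕ) (hp : p.1 + p.2 ≤ 3) : ∃ i, vertices3 i = p := by
  have : ∀ a < 4, ∀ b < 4, a + b ≤ 3 → ∃ i, vertices3 i = (a, b) := by decide
  exact this p.1 (by omega) p.2 (by omega) hp

lemma walkCount_three_origin (n : ℕ) :
    walkCount 3 n (0, 0) (0, 0) = (adjMatrix vertices3 3 ^ n) 0 0 :=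
  walkCount_eq_adjMatrix_pow vertices3_injective exists_vertices3_eq n 0 0

lemma adjMatrix_vertices3_pow_ten :
    adjMatrix vertices3 3 ^ 10 + 9 • adjMatrix vertices3 3 ^ 4 =
      9 • adjMatrix vertices3 3 ^ 7 + 8 • adjMatrix vertices3 3 := by
  decide

lemma walkCount_three_origin_add_ten (n : ℕ) :
    walkCount 3 (n + 10) (0, 0) (0, 0) + 9 * walkCount 3 (n + 4) (0, 0) (0, 0) =
      9 * walkCount 3 (n + 7) (0, 0) (0, 0) + 8 * walkCount 3 (n + 1) (0, 0) (0, 0) := by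
  have := congrArg (fun B => (adjMatrix vertices3 3 ^ n * B) 0 0) adjMatrix_vertices3_pow_ten
  simpa only [walkCount_three_origin, Matrix.mul_add, Matrix.mul_smul, ← pow_add, Matrix.add_apply,
    Matrix.smul_apply, smul_eq_mul, pow_one, ← pow_succ] using this

lemma walkCount_three_origin_of_lt_ten {n : ℕ} (hn : n < 10) :
    walkCount 3 n (0, 0) (0, 0) = ![1, 0, 0, 1, 0, 0, 5, 0, 0, 42] ⟨n, hn⟩ := by
  rw [walkCount_three_origin]
  revert n
  decide

lemma PowerSeries.coeff_ofNat_mul {R : Type*} [Semiring R] (c n : ℕ) [c.AtLeastTwo]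
    (φ : PowerSeries R) : coeff n ((ofNat(c) : PowerSeries R) * φ) = ofNat(c) * coeff n φ := by
  rw [← map_ofNat C c, coeff_C_mul]

/-- Generating function identity for closed walks at `(0,0)` in `D_3`:
`(1 - 9t³ + 9t⁶ - 8t⁹)·F(t) = 1 - 8t³ + 5t⁶ - 2t⁹`. -/
theorem stmt6 :
    (1 - 9 * (PowerSeries.X : PowerSeries ℚ) ^ 3 + 9 * PowerSeries.X ^ 6 -
          8 * PowerSeries.X ^ 9) *
        PowerSeries.mk (fun n => (walkCount 3 n (0, 0) (0, 0) : ℚ)) =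
      1 - 8 * PowerSeries.X ^ 3 + 5 * PowerSeries.X ^ 6 - 2 * PowerSeries.X ^ 9 := by
  ext n
  simp only [sub_mul, add_mul, one_mul, mul_assoc, map_sub, map_add, coeff_ofNat_mul,
    coeff_X_pow_mul', coeff_mk, coeff_X_pow, coeff_one]
  rcases lt_or_ge n 10 with hn | hn
  · interval_cases n <;> norm_num [walkCount_three_origin_of_lt_ten]
  · obtain ⟨m, rfl⟩ := Nat.exists_eq_add_of_le' hn
    have recurrence := congrArg (Nat.cast : ℕ → ℚ) (walkCount_three_origin_add_ten m)
    push_cast at recurrence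
    simp only [le_add_iff_nonneg_left, zero_le, ↓reduceIte, Nat.reduceSubDiff, Nat.add_eq_zero_iff,
      OfNat.ofNat_ne_zero, and_false, Nat.reduceEqDiff, mul_zero, sub_self, add_zero]
    linear_combination recurrence
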